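/- arXiv:1204.4162 — 4 statements merged into one kernel-verified Lean document; each statement's English description precedes it below -/
import Mathlib

section
/- For a ≤ x real, f integrable on [a,x], and k ≥ 1 a natural number, the k-fold iterated integral of f from a satisfies ∫_a^x ∫_a^{t₁} ⋯ ∫_a^{t_{k-1}} f(t_k) dt_k ⋯ dt₂ dt₁ = (1/Γ(k)) ∫_a^x (x − t)^{k−1} f(t) dt. -/
open MeasureTheory intervalIntegral

/-- The `k`-fold iterated integral of `f` based at `a`. -/
noncomputable def iterInt (a : ℝ) (f : ℝ → ℝ) : ℕ → ℝ → ℝ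
  | 0, x => f x
  | k + 1, x => ∫ t in a..x, iterInt a f k t

/-! Induction on `k`: each further integration is an integral over the triangle
`a < s ≤ t ≤ x`, and exchanging the order of integration by Fubini turns the kernel
`(t - s) ^ n` into `∫ t in s..x, (t - s) ^ n = (x - s) ^ (n + 1) / (n + 1)`. -/

open Set Function
open scoped Nat

theorem integral_integral_swap_triangle {E : Type*} [NormedAddCommGroup E] [NormedSpace ℝ E]
    {a x : ℝ} (hax : a ≤ x) {F : ℝ → ℝ → E}
    (hF : IntegrableOn (uncurry F) {p | a < p.2 ∧ p.2 ≤ p.1 ∧ p.1 ≤ x}) :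
    ∫ t in a..x, ∫ s in a..t, F t s = ∫ s in a..x, ∫ t in s..x, F t s := by
  set T : Set (ℝ × ℝ) := {p | a < p.2 ∧ p.2 ≤ p.1 ∧ p.1 ≤ x}
  have hT : MeasurableSet T :=
    measurableSet_lt measurable_const measurable_snd |>.inter <|
      (measurableSet_le measurable_snd measurable_fst).inter
        (measurableSet_le measurable_fst measurable_const)
  have hG : Integrable (uncurry fun t s => T.indicator (uncurry F) (t, s))
      (volume.prod volume) := by
    rw [Measure.volume_eq_prod] at hF
    exact (integrable_indicator_iff hT).2 hF
  have slice_t (t : ℝ) : ∫ s, T.indicator (uncurry F) (t, s) =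
      (Ioc a x).indicator (fun t => ∫ s in a..t, F t s) t := by
    by_cases ht : t ∈ Ioc a x
    · rw [indicator_of_mem ht, integral_of_le ht.1.le,
        ← MeasureTheory.integral_indicator measurableSet_Ioc]
      congr 1 with s
      simp only [indicator_apply, T, mem_ofPred_eq, mem_Ioc, uncurry_apply_pair]
      split_ifs <;> first | rfl | (exfalso; grind)
    · rw [indicator_of_notMem ht, ← integral_zero ℝ E]
      congr 1 with s
      exact indicator_of_notMem (fun h => ht ⟨h.1.trans_le h.2.1, h.2.2⟩) _
  have slice_s (s : ℝ) : ∫ t, T.indicator (uncurry F) (t, s) =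
      (Ioc a x).indicator (fun s => ∫ t in s..x, F t s) s := by
    by_cases hs : s ∈ Ioc a x
    · rw [indicator_of_mem hs, integral_of_le hs.2, ← integral_Icc_eq_integral_Ioc,
        ← MeasureTheory.integral_indicator measurableSet_Icc]
      congr 1 with t
      simp only [indicator_apply, T, mem_ofPred_eq, mem_Icc, uncurry_apply_pair]
      split_ifs <;> first | rfl | (exfalso; grind)
    · rw [indicator_of_notMem hs, ← integral_zero ℝ E]
      congr 1 with t
      exact indicator_of_notMem (fun h => hs ⟨h.1, h.2.1.trans h.2.2⟩) _
  calc ∫ t in a..x, ∫ s in a..t, F t s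
      = ∫ t, ∫ s, T.indicator (uncurry F) (t, s) := by
        simp only [slice_t, MeasureTheory.integral_indicator measurableSet_Ioc,
          integral_of_le hax]
    _ = ∫ s, ∫ t, T.indicator (uncurry F) (t, s) := integral_integral_swap hG
    _ = ∫ s in a..x, ∫ t in s..x, F t s := by
        simp only [slice_s, MeasureTheory.integral_indicator measurableSet_Ioc,
          integral_of_le hax]

theorem integrableOn_sub_pow_mul_triangle {a x : ℝ} {f : ℝ → ℝ}
    (hf : IntegrableOn f (Icc a x)) (n : ℕ) :
    IntegrableOn (fun p : ℝ × ℝ => (p.1 - p.2) ^ n * f p.2)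
      {p | a < p.2 ∧ p.2 ≤ p.1 ∧ p.1 ≤ x} := by
  have hsq : IntegrableOn (fun p : ℝ × ℝ => f p.2) (Icc a x ×ˢ Icc a x) := by
    rw [IntegrableOn, Measure.volume_eq_prod, ← Measure.prod_restrict]
    simpa using (integrable_const (1 : ℝ)).mul_prod hf
  refine (hsq.continuousOn_mul (by fun_prop) (isCompact_Icc.prod isCompact_Icc)).mono_set ?_
  rintro p ⟨h1, h2, h3⟩
  exact ⟨⟨by linarith, h3⟩, h1.le, h2.trans h3⟩

theorem integral_integral_sub_pow_mul {a x : ℝ} (hax : a ≤ x) {f : ℝ → ℝ}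
    (hf : IntegrableOn f (Icc a x)) (n : ℕ) :
    ∫ t in a..x, ∫ s in a..t, (t - s) ^ n * f s =
      (n + 1 : ℝ)⁻¹ * ∫ s in a..x, (x - s) ^ (n + 1) * f s := by
  rw [integral_integral_swap_triangle hax (F := fun t s => (t - s) ^ n * f s)
      (integrableOn_sub_pow_mul_triangle hf n),
    ← intervalIntegral.integral_const_mul]
  congr 1 with s
  rw [intervalIntegral.integral_mul_const, intervalIntegral.integral_comp_sub_right
    (· ^ n), integral_pow]
  ring

theorem iterInt_succ {a : ℝ} {f : ℝ → ℝ} (n : ℕ) {x : ℝ} (hax : a ≤ x)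
    (hf : IntegrableOn f (Icc a x)) :
    iterInt a f (n + 1) x = (n ! : ℝ)⁻¹ * ∫ t in a..x, (x - t) ^ n * f t := by
  induction n generalizing x with
  | zero => simp [iterInt]
  | succ n ih =>
    have hslice : EqOn (iterInt a f (n + 1))
        (fun t => (n ! : ℝ)⁻¹ * ∫ s in a..t, (t - s) ^ n * f s) (uIcc a x) := by
      intro t ht
      rw [uIcc_of_le hax] at ht
      exact ih ht.1 (hf.mono_set (Icc_subset_Icc_right ht.2))
    rw [iterInt, integral_congr hslice, intervalIntegral.integral_const_mul,
      integral_integral_sub_pow_mul hax hf, Nat.factorial_succ]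
    push_cast
    rw [mul_inv]
    ring

theorem cauchy_repeated_integration
    (a x : ℝ) (hax : a ≤ x) (f : ℝ → ℝ)
    (hf : IntegrableOn f (Set.Icc a x))
    (k : ℕ) (hk : 1 ≤ k) :
    iterInt a f k x =
      (1 / Real.Gamma k) * ∫ t in a..x, (x - t) ^ (k - 1) * f t := by
  obtain ⟨n, rfl⟩ := Nat.exists_eq_add_of_le' hk
  rw [iterInt_succ n hax hf, Nat.cast_succ, Real.Gamma_nat_eq_factorial, one_div,
    Nat.add_sub_cancel]
end

section
/- For every natural number l ≥ 1, ζ(2l) = (2^{2l−1}/(1 − 2^{2l})) · { [(−1)^{l+1}/(4l) + (−1)^l/2] · π^{2l}/(2l−1)! + ∑_{j=1}^{l−1} ((−1)^{l−j} · π^{2(l−j)} / (2(l−j))!) · ζ(2j) }, where the sum is empty (equal to 0) when l = 1. -/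
/-!
Euler's formula writes every `ζ(2j)` as a rational multiple of `π^(2j) B_(2j) / (2j)!`, so after
factoring out `(-1)^(l+1) π^(2l) / (2 (2l)!)` the recurrence becomes an identity between Bernoulli
numbers: `∑_{1 ≤ j < l} C(2l, 2j) 2^(2j) B_(2j) = (2 - 2^(2l+1)) B_(2l) + 2l - 1`.
That identity is the value `B_n(1/2) = (2^(1-n) - 1) B_n` of the Bernoulli polynomial, expanded by
the binomial formula and split into even and odd indices, where only `B_1` survives among the odd.
-/

open Finset Real

theorem Finset.sum_range_two_mul_add_one {M : Type*} [AddCommMonoid M] (f : ℕ → M) (m : ℕ) :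
    ∑ k ∈ range (2 * m + 1), f k =
      ∑ j ∈ range (m + 1), f (2 * j) + ∑ j ∈ range m, f (2 * j + 1) := by
  induction m with
  | zero => simp
  | succ m ih =>
    rw [sum_range_succ (fun j ↦ f (2 * j)), sum_range_succ (fun j ↦ f (2 * j + 1)), Nat.mul_succ,
      sum_range_succ, sum_range_succ, ih]
    abel

theorem sum_range_choose_mul_two_pow_mul_bernoulli (n : ℕ) :
    ∑ k ∈ range (n + 1), (n.choose k : ℝ) * 2 ^ k * bernoulli k = (2 - 2 ^ n) * bernoulli n := by
  have h := bernoulliFun_eval_half n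
  simp only [bernoulliFun, Polynomial.bernoulli, Polynomial.map_sum, Polynomial.eval_finsetSum,
    Polynomial.map_monomial, Polynomial.eval_monomial, eq_ratCast, Rat.cast_mul,
    Rat.cast_natCast] at h
  calc ∑ k ∈ range (n + 1), (n.choose k : ℝ) * 2 ^ k * bernoulli k
      = 2 ^ n * ∑ k ∈ range (n + 1), bernoulli k * (n.choose k : ℝ) * 2⁻¹ ^ (n - k) := by
        rw [mul_sum]
        refine sum_congr rfl fun k hk ↦ ?_
        rw [← Nat.add_sub_cancel' (mem_range_succ_iff.mp hk), pow_add, Nat.add_sub_cancel_left,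
          inv_pow]
        field_simp
    _ = (2 - 2 ^ n) * bernoulli n := by
        rw [h]
        field_simp

theorem sum_Icc_choose_mul_two_pow_mul_bernoulli_two_mul {l : ℕ} (hl : 1 ≤ l) :
    ∑ j ∈ Icc 1 (l - 1), ((2 * l).choose (2 * j) : ℝ) * 2 ^ (2 * j) * bernoulli (2 * j) =
      (2 - 2 ^ (2 * l + 1)) * bernoulli (2 * l) + 2 * l - 1 := by
  set g : ℕ → ℝ := fun k ↦ ((2 * l).choose k : ℝ) * 2 ^ k * bernoulli k with hg
  have hsplit := sum_range_choose_mul_two_pow_mul_bernoulli (2 * l)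
  rw [sum_range_two_mul_add_one g] at hsplit
  have hodd : ∑ j ∈ range l, g (2 * j + 1) = -2 * l := by
    rw [sum_eq_single_of_mem 0 (mem_range.mpr hl)]
    · simp only [hg, mul_zero, zero_add, Nat.choose_one_right, pow_one, bernoulli_one]
      push_cast
      ring
    · intro j _ hj
      simp [hg, bernoulli_eq_zero_of_odd (odd_two_mul_add_one j) (by omega)]
  have heven : ∑ j ∈ range (l + 1), g (2 * j) =
      g 0 + ∑ j ∈ Icc 1 (l - 1), g (2 * j) + g (2 * l) := by
    obtain ⟨m, rfl⟩ := Nat.exists_eq_add_of_le' hl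
    rw [range_eq_Ico, sum_eq_sum_Ico_succ_bot (by omega), sum_Ico_succ_top (by omega),
      Ico_add_one_right_eq_Icc, Nat.add_sub_cancel]
    ac_rfl
  rw [heven, hodd] at hsplit
  simp only [hg, Nat.choose_zero_right, Nat.choose_self, Nat.cast_one, pow_zero, mul_one, one_mul,
    bernoulli_zero, Rat.cast_one] at hsplit
  linear_combination hsplit

theorem tsum_one_div_nat_add_one_pow_two_mul {k : ℕ} (hk : k ≠ 0) :
    ∑' n : ℕ, 1 / ((n : ℝ) + 1) ^ (2 * k) =
      (-1) ^ (k + 1) * π ^ (2 * k) / (2 * (2 * k).factorial) *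
        (2 ^ (2 * k) * bernoulli (2 * k)) := by
  have h := (hasSum_nat_add_iff' 1).mpr (hasSum_zeta_nat hk)
  simp only [range_one, sum_singleton, Nat.cast_zero, zero_pow (by omega : 2 * k ≠ 0), div_zero,
    sub_zero, Nat.cast_add, Nat.cast_one] at h
  rw [h.tsum_eq, pow_sub₀ _ two_ne_zero (by omega : 1 ≤ 2 * k), pow_one]
  field_simp

theorem neg_one_pow_mul_pi_pow_div_factorial_mul_tsum {j l : ℕ} (hj : j ≠ 0) (hjl : j ≤ l) :
    (-1) ^ (l - j) * π ^ (2 * (l - j)) / (2 * (l - j)).factorial *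
        ∑' n : ℕ, 1 / ((n : ℝ) + 1) ^ (2 * j) =
      (-1) ^ (l + 1) * π ^ (2 * l) / (2 * (2 * l).factorial) *
        ((2 * l).choose (2 * j) * 2 ^ (2 * j) * bernoulli (2 * j)) := by
  have hsign : (-1 : ℝ) ^ (l - j) * (-1) ^ (j + 1) = (-1) ^ (l + 1) := by
    rw [← pow_add]; congr 1; omega
  have hpi : π ^ (2 * (l - j)) * π ^ (2 * j) = π ^ (2 * l) := by
    rw [← pow_add]; congr 1; omega
  rw [tsum_one_div_nat_add_one_pow_two_mul hj, Nat.cast_choose ℝ (by omega : 2 * j ≤ 2 * l),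
    ← hsign, ← hpi, show 2 * l - 2 * j = 2 * (l - j) by omega]
  field_simp

theorem zeta_even_recurrence (l : ℕ) (hl : 1 ≤ l) :
    (∑' n : ℕ, 1 / ((n : ℝ) + 1) ^ (2 * l)) =
      ((2 : ℝ) ^ (2 * l - 1) / (1 - (2 : ℝ) ^ (2 * l))) *
        (((-1 : ℝ) ^ (l + 1) / (4 * l) + (-1 : ℝ) ^ l / 2) *
            π ^ (2 * l) / (Nat.factorial (2 * l - 1) : ℝ) +
          ∑ j ∈ Finset.Icc 1 (l - 1),
            ((-1 : ℝ) ^ (l - j) * π ^ (2 * (l - j)) /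
                (Nat.factorial (2 * (l - j)) : ℝ)) *
              ∑' n : ℕ, 1 / ((n : ℝ) + 1) ^ (2 * j)) := by
  have hfirst : ((-1 : ℝ) ^ (l + 1) / (4 * l) + (-1) ^ l / 2) * π ^ (2 * l) / (2 * l - 1).factorial
      = (-1) ^ (l + 1) * π ^ (2 * l) / (2 * (2 * l).factorial) * (1 - 2 * l) := by
    have : (l : ℝ) ≠ 0 := by positivity
    rw [← Nat.mul_factorial_pred (by omega : 2 * l ≠ 0), pow_succ]
    push_cast
    field_simp
    ring
  have hsum : ∑ j ∈ Icc 1 (l - 1), (-1) ^ (l - j) * π ^ (2 * (l - j)) /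
        (2 * (l - j)).factorial * ∑' n : ℕ, 1 / ((n : ℝ) + 1) ^ (2 * j) =
      (-1) ^ (l + 1) * π ^ (2 * l) / (2 * (2 * l).factorial) *
        ((2 - 2 ^ (2 * l + 1)) * bernoulli (2 * l) + 2 * l - 1) := by
    rw [← sum_Icc_choose_mul_two_pow_mul_bernoulli_two_mul hl, mul_sum]
    refine sum_congr rfl fun j hj ↦ ?_
    obtain ⟨hj1, hjl⟩ := mem_Icc.mp hj
    exact neg_one_pow_mul_pi_pow_div_factorial_mul_tsum (by omega) (by omega)
  have hpow : (1 : ℝ) - 2 ^ (2 * l) ≠ 0 :=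
    (sub_neg.mpr (one_lt_pow₀ one_lt_two (by omega))).ne
  rw [hfirst, hsum, tsum_one_div_nat_add_one_pow_two_mul (by omega),
    pow_sub₀ _ two_ne_zero (by omega : 1 ≤ 2 * l), pow_one]
  field_simp
  ring
end

section
/- For all natural numbers n ≥ 1, l ≥ 1 and all real x in [0, π], ∑_{k=1}^{n} cos(kx)/k^{2l} = (−1)^l I_{2l}(f)(x) + ∑_{j=1}^{l} (−1)^{l−j} I_{2(l−j)}(H_n^{(2j)})(x), where f(t) = −1/2 + sin((2n+1)t/2)/(2 sin(t/2)) (extended continuously at t = 0), H_n^{(m)} denotes the constant function ∑_{k=1}^{n} 1/k^m, and I_j(g)(x) = (1/Γ(j)) ∫_0^x (x−t)^{j−1} g(t) dt for j ≥ 1 with I_0(g)(x) = g(x). -/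
/-!
On `[0, π]` the function `f` is the Dirichlet sum `∑ k, cos (k t)`, and `RL` is linear, so it
suffices to treat a single `cos (k ·)`. Integration by parts gives
`RL (j + 1) g' = RL j g - g 0 * x ^ j / j !`; applied twice to `cos (k ·)` it yields
`k ^ 2 * RL (j + 2) cos_k = x ^ j / j ! - RL j cos_k`, and iterating this is Taylor's formula
for `cos (k x)` with integral remainder `(-1) ^ l * k ^ (2 l) * RL (2 l) cos_k x`. Dividing by
`k ^ (2 l)` and summing over `k` gives the claim, the Taylor terms becoming `RL` of the
constants `H_n^(2j)`.
-/

open Real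

/-- Riemann–Liouville iterated integral operator based at `0`, with
`RL 0 g = g`. -/
noncomputable def RL (j : ℕ) (g : ℝ → ℝ) (x : ℝ) : ℝ :=
  if j = 0 then g x
  else (1 / Real.Gamma j) * ∫ t in (0:ℝ)..x, (x - t) ^ (j - 1) * g t

open Finset Nat

lemma RL_succ (m : ℕ) (g : ℝ → ℝ) (x : ℝ) :
    RL (m + 1) g x = (1 / (m ! : ℝ)) * ∫ t in (0:ℝ)..x, (x - t) ^ m * g t := by
  rw [RL, if_neg m.succ_ne_zero, Nat.cast_succ, Real.Gamma_nat_eq_factorial, Nat.add_sub_cancel]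

lemma RL_congr {g g' : ℝ → ℝ} {x : ℝ} (h : Set.EqOn g g' (Set.uIcc 0 x)) (j : ℕ) :
    RL j g x = RL j g' x := by
  rcases j with _ | m
  · exact h Set.right_mem_uIcc
  · rw [RL_succ, RL_succ, intervalIntegral.integral_congr fun t ht => by rw [h ht]]

lemma RL_const_mul (j : ℕ) (c : ℝ) (g : ℝ → ℝ) (x : ℝ) :
    RL j (fun t => c * g t) x = c * RL j g x := by
  rcases j with _ | m
  · rfl
  · simp only [RL_succ, mul_left_comm _ c, intervalIntegral.integral_const_mul]

lemma RL_finsetSum {ι : Type*} (s : Finset ι) {g : ι → ℝ → ℝ}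
    (hg : ∀ i ∈ s, Continuous (g i)) (j : ℕ) (x : ℝ) :
    RL j (fun t => ∑ i ∈ s, g i t) x = ∑ i ∈ s, RL j (g i) x := by
  rcases j with _ | m
  · rfl
  · simp only [RL_succ, mul_sum]
    have hint : ∀ i ∈ s, Continuous fun t => (x - t) ^ m * g i t := fun i hi => by
      have := hg i hi
      fun_prop
    rw [intervalIntegral.integral_finsetSum fun i hi => (hint i hi).intervalIntegrable 0 x, mul_sum]

lemma RL_const (m : ℕ) (c x : ℝ) : RL m (fun _ => c) x = c * x ^ m / m ! := by
  rcases m with _ | m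
  · simp [RL]
  · rw [RL_succ, intervalIntegral.integral_mul_const,
      intervalIntegral.integral_comp_sub_left (fun t => t ^ m), integral_pow, Nat.factorial_succ]
    push_cast
    field_simp
    ring

lemma RL_succ_of_hasDerivAt {g g' : ℝ → ℝ} (hg : ∀ t, HasDerivAt g (g' t) t)
    (hg' : Continuous g') (j : ℕ) (x : ℝ) :
    RL (j + 1) g' x = RL j g x - g 0 * x ^ j / j ! := by
  rcases j with _ | m
  · simp [RL, intervalIntegral.integral_eq_sub_of_hasDerivAt (fun t _ => hg t)
      (hg'.intervalIntegrable 0 x)]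
  · have hpow : ∀ t, HasDerivAt (fun t => (x - t) ^ (m + 1)) (-((m + 1) * (x - t) ^ m)) t := by
      intro t
      simpa using ((hasDerivAt_id t).const_sub x).fun_pow (m + 1)
    have parts := intervalIntegral.integral_mul_deriv_eq_deriv_mul (fun t _ => hpow t)
      (fun t _ => hg t) (Continuous.intervalIntegrable (by fun_prop) 0 x)
      (hg'.intervalIntegrable 0 x)
    rw [RL_succ, RL_succ, parts]
    simp only [sub_self, zero_pow m.succ_ne_zero, zero_mul, sub_zero, neg_mul,
      intervalIntegral.integral_neg, mul_assoc, intervalIntegral.integral_const_mul]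
    rw [Nat.factorial_succ]
    push_cast
    field_simp
    ring

lemma sq_mul_RL_add_two_cos (k : ℝ) (j : ℕ) (x : ℝ) :
    k ^ 2 * RL (j + 2) (fun t => cos (k * t)) x =
      x ^ j / (j ! : ℝ) - RL j (fun t => cos (k * t)) x := by
  have hsin : RL (j + 2) (fun t => k * cos (k * t)) x = RL (j + 1) (fun t => sin (k * t)) x := by
    rw [RL_succ_of_hasDerivAt (g := fun t => sin (k * t))
      (fun t => by simpa [mul_comm] using ((hasDerivAt_id t).const_mul k).sin) (by fun_prop)]
    simp
  have hcos : RL (j + 1) (fun t => -k * sin (k * t)) x =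
      RL j (fun t => cos (k * t)) x - x ^ j / (j ! : ℝ) := by
    rw [RL_succ_of_hasDerivAt (g := fun t => cos (k * t))
      (fun t => by simpa [mul_comm] using ((hasDerivAt_id t).const_mul k).cos) (by fun_prop)]
    simp
  rw [RL_const_mul] at hsin hcos
  linear_combination k * hsin - hcos

lemma cos_mul_eq_sum_add_RL (k x : ℝ) (l : ℕ) :
    cos (k * x) = ∑ i ∈ range l, (-1) ^ i * (k * x) ^ (2 * i) / (2 * i) ! +
      (-1) ^ l * k ^ (2 * l) * RL (2 * l) (fun t => cos (k * t)) x := by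
  induction l with
  | zero => simp [RL]
  | succ l ih =>
    rw [sum_range_succ, show 2 * (l + 1) = 2 * l + 2 by ring]
    linear_combination ih + (-1) ^ l * k ^ (2 * l) * sq_mul_RL_add_two_cos k (2 * l) x

lemma cos_mul_div_pow_eq_RL {k : ℝ} (hk : k ≠ 0) (x : ℝ) (l : ℕ) :
    cos (k * x) / k ^ (2 * l) = (-1) ^ l * RL (2 * l) (fun t => cos (k * t)) x +
      ∑ j ∈ Icc 1 l, (-1) ^ (l - j) * RL (2 * (l - j)) (fun _ => 1 / k ^ (2 * j)) x := by
  rw [cos_mul_eq_sum_add_RL k x l, add_div, sum_div, add_comm]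
  congr 1
  · field_simp
  · refine sum_nbij' (fun i => l - i) (fun j => l - j)
      (fun i hi => by simp only [mem_range, mem_Icc] at hi ⊢; omega)
      (fun j hj => by simp only [mem_range, mem_Icc] at hj ⊢; omega)
      (fun i hi => by simp only [mem_range] at hi; omega)
      (fun j hj => by simp only [mem_Icc] at hj; omega) ?_
    intro i hi
    rw [mem_range] at hi
    rw [RL_const, Nat.sub_sub_self hi.le, ← pow_mul_pow_sub k (show 2 * i ≤ 2 * l by omega),
      show 2 * l - 2 * i = 2 * (l - i) by omega]
    field_simp
    ring

lemma two_mul_sin_half_mul_sum_cos (n : ℕ) (t : ℝ) :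
    2 * sin (t / 2) * ∑ k ∈ Icc 1 n, cos (k * t) = sin ((2 * n + 1) * t / 2) - sin (t / 2) := by
  induction n with
  | zero => simp
  | succ n ih =>
    rw [sum_Icc_succ_top (by omega), mul_add, ih]
    have h₁ : (2 * ((n + 1 : ℕ) : ℝ) + 1) * t / 2 = (n + 1 : ℕ) * t + t / 2 := by
      push_cast; ring
    have h₂ : (2 * (n : ℝ) + 1) * t / 2 = (n + 1 : ℕ) * t - t / 2 := by push_cast; ring
    rw [h₁, h₂, sin_add, sin_sub]
    ring

lemma dirichlet_eq_sum_cos (n : ℕ) {t : ℝ} (ht₀ : 0 ≤ t) (ht : t < 2 * π) :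
    (if t = 0 then (n : ℝ) else -1 / 2 + sin ((2 * n + 1) * t / 2) / (2 * sin (t / 2))) =
      ∑ k ∈ Icc 1 n, cos (k * t) := by
  split_ifs with h
  · simp [h]
  · have hsin : 0 < sin (t / 2) := sin_pos_of_pos_of_lt_pi (by positivity) (by linarith)
    rw [← eq_sub_iff_add_eq.mp (two_mul_sin_half_mul_sum_cos n t)]
    field_simp
    ring

theorem cos_sum_rl_decomposition_general (n l : ℕ)
    (x : ℝ) (hx : x ∈ Set.Icc 0 π) :
    ∑ k ∈ Finset.Icc 1 n, Real.cos (k * x) / (k : ℝ) ^ (2 * l) =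
      (-1 : ℝ) ^ l *
          RL (2 * l)
            (fun t : ℝ =>
              if t = 0 then (n : ℝ)
              else -1 / 2 + Real.sin ((2 * n + 1) * t / 2) / (2 * Real.sin (t / 2)))
            x +
        ∑ j ∈ Finset.Icc 1 l,
          (-1 : ℝ) ^ (l - j) *
            RL (2 * (l - j)) (fun _ => ∑ k ∈ Finset.Icc 1 n, 1 / (k : ℝ) ^ (2 * j)) x := by
  have hf : Set.EqOn (fun t : ℝ => if t = 0 then (n : ℝ)
      else -1 / 2 + sin ((2 * n + 1) * t / 2) / (2 * sin (t / 2)))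
      (fun t => ∑ k ∈ Icc 1 n, cos (k * t)) (Set.uIcc 0 x) := fun t ht => by
    rw [Set.uIcc_of_le hx.1] at ht
    exact dirichlet_eq_sum_cos n ht.1 (by linarith [ht.2, hx.2, pi_pos])
  calc ∑ k ∈ Icc 1 n, cos (k * x) / (k : ℝ) ^ (2 * l)
      = ∑ k ∈ Icc 1 n, ((-1) ^ l * RL (2 * l) (fun t => cos (k * t)) x +
          ∑ j ∈ Icc 1 l,
            (-1) ^ (l - j) * RL (2 * (l - j)) (fun _ => 1 / (k : ℝ) ^ (2 * j)) x) :=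
        sum_congr rfl fun k hk =>
          cos_mul_div_pow_eq_RL (Nat.cast_ne_zero.2 (by have := (mem_Icc.1 hk).1; omega)) x l
    _ = _ := by
      rw [sum_add_distrib, ← mul_sum, sum_comm, RL_congr hf,
        RL_finsetSum _ (fun k _ => by fun_prop)]
      congr 1
      refine sum_congr rfl fun j _ => ?_
      rw [← mul_sum, RL_finsetSum (g := fun (k : ℕ) _ => 1 / (k : ℝ) ^ (2 * j)) _
        (fun _ _ => continuous_const)]

theorem cos_sum_rl_decomposition (n l : ℕ) (hn : 1 ≤ n) (hl : 1 ≤ l)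
    (x : ℝ) (hx : x ∈ Set.Icc 0 π) :
    ∑ k ∈ Finset.Icc 1 n, Real.cos (k * x) / (k : ℝ) ^ (2 * l) =
      (-1 : ℝ) ^ l *
          RL (2 * l)
            (fun t : ℝ =>
              if t = 0 then (n : ℝ)
              else -1 / 2 + Real.sin ((2 * n + 1) * t / 2) / (2 * Real.sin (t / 2)))
            x +
        ∑ j ∈ Finset.Icc 1 l,
          (-1 : ℝ) ^ (l - j) *
            RL (2 * (l - j)) (fun _ => ∑ k ∈ Finset.Icc 1 n, 1 / (k : ℝ) ^ (2 * j)) x :=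
  cos_sum_rl_decomposition_general n l x hx
end

section
/- For every natural number n ≥ 1 and real x with 0 < x ≤ π, | ∫_0^{π/2} (t^s / sin t) · sin((2n+1)t) dt | ≤ (π/2)^s · 2/(2n+1), for every real s ≥ 1, where t^s/sin t is extended by 0 at t = 0. -/
/-!
On `(0, π/2]` the weight `G t = t ^ s / sin t` is nonnegative and, because `t cos t ≤ sin t` and
`s ≥ 1`, nondecreasing, with `G (π/2) = (π/2) ^ s`. Integrating `G t * sin (m t)` by parts against
the antiderivative `(1 - cos (m t)) / m`, which takes values in `[0, 2/m]`, bounds the integral over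
`[c, π/2]` by `G (π/2) * 2/m` for every `c > 0` (Bonnet's second mean value theorem); since `G` is
monotone, hence integrable, on `[0, π/2]`, letting `c → 0` gives the bound on `[0, π/2]`.
-/

open Real Set MeasureTheory intervalIntegral Filter Topology

theorem abs_integral_le_of_forall_mem_Ioo_abs_integral_le {f : ℝ → ℝ} {a b B : ℝ} (hab : a < b)
    (hf : IntervalIntegrable f volume a b) (h : ∀ c ∈ Ioo a b, |∫ t in c..b, f t| ≤ B) :
    |∫ t in a..b, f t| ≤ B := by
  have hcont : ContinuousOn (fun c => ∫ t in b..c, f t) (Icc a b) := by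
    simpa [uIcc_of_ge hab.le] using continuousOn_primitive_interval' hf.symm left_mem_uIcc
  have hlim : Tendsto (fun c => |∫ t in b..c, f t|) (𝓝[>] a) (𝓝 |∫ t in b..a, f t|) :=
    ((hcont a (left_mem_Icc.2 hab.le)).mono_of_mem_nhdsWithin (Icc_mem_nhdsGT hab)).abs
  simp only [integral_symm b, abs_neg] at h ⊢
  exact le_of_tendsto hlim (mem_of_superset (Ioo_mem_nhdsGT hab) h)

theorem abs_integral_mul_le_of_deriv_nonneg {a b C : ℝ} {G G' F f : ℝ → ℝ} (hab : a ≤ b)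
    (hG : ContinuousOn G (Icc a b)) (hGd : ∀ t ∈ Ioo a b, HasDerivAt G (G' t) t)
    (hG' : ∀ t ∈ Ioo a b, 0 ≤ G' t) (hGa : 0 ≤ G a)
    (hF : ContinuousOn F (Icc a b)) (hFd : ∀ t ∈ Ioo a b, HasDerivAt F (f t) t)
    (hf : IntervalIntegrable f volume a b)
    (hF0 : ∀ t ∈ Icc a b, 0 ≤ F t) (hFC : ∀ t ∈ Icc a b, F t ≤ C) :
    |∫ t in a..b, G t * f t| ≤ G b * C := by
  have integral_nonneg_of_Ioo (g : ℝ → ℝ) (hg : ∀ t ∈ Ioo a b, 0 ≤ g t) :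
      0 ≤ ∫ t in a..b, g t := by
    rw [integral_of_le hab, integral_Ioc_eq_integral_Ioo]
    exact setIntegral_nonneg measurableSet_Ioo hg
  have hG'i : IntervalIntegrable G' volume a b :=
    (intervalIntegrable_iff_integrableOn_Ioc_of_le hab).2 (integrableOn_deriv_of_nonneg hG hGd hG')
  have hparts : ∫ t in a..b, G t * f t = G b * F b - G a * F a - ∫ t in a..b, G' t * F t :=
    integral_mul_deriv_eq_deriv_mul_of_hasDerivAt (by rwa [uIcc_of_le hab])
      (by rwa [uIcc_of_le hab]) (by simpa [hab] using hGd) (by simpa [hab] using hFd) hG'i hf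
  have hftc : ∫ t in a..b, G' t = G b - G a :=
    integral_eq_sub_of_hasDerivAt_of_le hab hG hGd hG'i
  have hGab : G a ≤ G b := sub_nonneg.1 (hftc ▸ integral_nonneg_of_Ioo G' hG')
  have hlow : 0 ≤ ∫ t in a..b, G' t * F t :=
    integral_nonneg_of_Ioo _ fun t ht => mul_nonneg (hG' t ht) (hF0 t (Ioo_subset_Icc_self ht))
  have hhigh : ∫ t in a..b, G' t * F t ≤ (G b - G a) * C := by
    rw [← hftc, ← intervalIntegral.integral_mul_const]
    exact integral_mono_on_of_le_Ioo hab (hG'i.mul_continuousOn (by rwa [uIcc_of_le hab]))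
      (hG'i.mul_const C) fun t ht =>
        mul_le_mul_of_nonneg_left (hFC t (Ioo_subset_Icc_self ht)) (hG' t ht)
  have hFa := hF0 a (left_mem_Icc.2 hab)
  have hFb := hF0 b (right_mem_Icc.2 hab)
  have hFa' := hFC a (left_mem_Icc.2 hab)
  have hFb' := hFC b (right_mem_Icc.2 hab)
  rw [hparts, abs_le]
  constructor <;> linarith [mul_nonneg hGa hFa, mul_le_mul_of_nonneg_left hFb' (hGa.trans hGab),
    mul_le_mul_of_nonneg_left hFa' hGa, mul_nonneg (hGa.trans hGab) hFb]

theorem mul_cos_le_sin {t : ℝ} (h0 : 0 ≤ t) (h : t < π / 2) : t * cos t ≤ sin t := by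
  have hcos : 0 < cos t := cos_pos_of_mem_Ioo ⟨by linarith [pi_pos], h⟩
  have := le_tan h0 h
  rwa [tan_eq_sin_div_cos, le_div_iff₀ hcos] at this

theorem sin_pos_of_mem_Ioc_zero_pi_div_two {t : ℝ} (ht : t ∈ Ioc 0 (π / 2)) : 0 < sin t :=
  sin_pos_of_pos_of_lt_pi ht.1 (by linarith [ht.2, pi_pos])

theorem hasDerivAt_rpow_div_sin (s : ℝ) {t : ℝ} (ht : t ∈ Ioc 0 (π / 2)) :
    HasDerivAt (fun u => u ^ s / sin u)
      ((s * t ^ (s - 1) * sin t - t ^ s * cos t) / sin t ^ 2) t :=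
  (hasDerivAt_rpow_const (Or.inl ht.1.ne')).div (hasDerivAt_sin t)
    (sin_pos_of_mem_Ioc_zero_pi_div_two ht).ne'

theorem rpow_div_sin_deriv_nonneg {s t : ℝ} (hs : 1 ≤ s) (ht0 : 0 < t) (ht : t < π / 2) :
    0 ≤ (s * t ^ (s - 1) * sin t - t ^ s * cos t) / sin t ^ 2 := by
  have hsin : 0 < sin t := sin_pos_of_mem_Ioc_zero_pi_div_two ⟨ht0, ht.le⟩
  have hpow : t ^ s = t ^ (s - 1) * t := by
    rw [rpow_sub_one ht0.ne', div_mul_cancel₀ _ ht0.ne']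
  have hcos := mul_cos_le_sin ht0.le ht
  have hpos : 0 < t ^ (s - 1) := rpow_pos_of_pos ht0 _
  rw [hpow]
  refine div_nonneg ?_ (sq_nonneg _)
  nlinarith [mul_le_mul_of_nonneg_left hcos hpos.le, mul_le_mul_of_nonneg_right hs hsin.le]

theorem monotoneOn_rpow_div_sin {s : ℝ} (hs : 1 ≤ s) :
    MonotoneOn (fun t => t ^ s / sin t) (Icc 0 (π / 2)) := by
  have hIoc : MonotoneOn (fun t => t ^ s / sin t) (Ioc 0 (π / 2)) := by
    refine monotoneOn_of_hasDerivWithinAt_nonneg (convex_Ioc _ _)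
      (fun t ht => (hasDerivAt_rpow_div_sin s ht).continuousAt.continuousWithinAt)
      (fun t ht => (hasDerivAt_rpow_div_sin s (interior_subset ht)).hasDerivWithinAt) ?_
    rw [interior_Ioc]
    exact fun t ht => rpow_div_sin_deriv_nonneg hs ht.1 ht.2
  rintro a ⟨ha0, -⟩ b ⟨-, hb⟩ hab
  rcases ha0.eq_or_lt with rfl | ha0
  · simpa using div_nonneg (rpow_nonneg hab s)
      (sin_nonneg_of_nonneg_of_le_pi hab (by linarith [pi_pos]))
  · exact hIoc ⟨ha0, hab.trans hb⟩ ⟨ha0.trans_le hab, hb⟩ hab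

theorem abs_integral_rpow_div_sin_mul_sin_le {s m c : ℝ} (hs : 1 ≤ s) (hm : 0 < m) (hc : 0 < c)
    (hcπ : c ≤ π / 2) :
    |∫ t in c..π / 2, t ^ s / sin t * sin (m * t)| ≤ (π / 2) ^ s * (2 / m) := by
  have hGd (t : ℝ) (ht : t ∈ Icc c (π / 2)) := hasDerivAt_rpow_div_sin s ⟨hc.trans_le ht.1, ht.2⟩
  have hFd (t : ℝ) : HasDerivAt (fun u => (1 - cos (m * u)) / m) (sin (m * t)) t :=
    ((((hasDerivAt_id' t).const_mul m).cos.const_sub 1).div_const m).congr_deriv (by field_simp)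
  have hF (t : ℝ) : 0 ≤ (1 - cos (m * t)) / m ∧ (1 - cos (m * t)) / m ≤ 2 / m :=
    ⟨div_nonneg (by linarith [cos_le_one (m * t)]) hm.le,
      div_le_div_of_nonneg_right (by linarith [neg_one_le_cos (m * t)]) hm.le⟩
  simpa [sin_pi_div_two] using abs_integral_mul_le_of_deriv_nonneg hcπ
    (fun t ht => (hGd t ht).continuousAt.continuousWithinAt)
    (fun t ht => hGd t (Ioo_subset_Icc_self ht))
    (fun t ht => rpow_div_sin_deriv_nonneg hs (hc.trans ht.1) ht.2)
    (div_nonneg (rpow_nonneg hc.le s) (sin_pos_of_mem_Ioc_zero_pi_div_two ⟨hc, hcπ⟩).le)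
    (fun t _ => (hFd t).continuousAt.continuousWithinAt) (fun t _ => hFd t)
    ((by fun_prop : Continuous fun t => sin (m * t)).intervalIntegrable _ _)
    (fun t _ => (hF t).1) (fun t _ => (hF t).2)

theorem abs_integral_rpow_div_sin_le_general (n : ℕ) (s : ℝ) (hs : 1 ≤ s) :
    |∫ t in (0:ℝ)..(π / 2),
        (if t = 0 then 0 else t ^ s / Real.sin t) * Real.sin ((2 * n + 1) * t)| ≤
      (π / 2) ^ s * (2 / (2 * n + 1)) := by
  -- at `t = 0` the junk value `0 ^ s / sin 0 = 0 / 0 = 0` is the extension by `0`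
  have hext (t : ℝ) : (if t = 0 then 0 else t ^ s / sin t) = t ^ s / sin t := by
    split_ifs with ht <;> simp [ht]
  simp only [hext]
  have hint :
      IntervalIntegrable (fun t => t ^ s / sin t * sin ((2 * n + 1) * t)) volume 0 (π / 2) := by
    refine MonotoneOn.intervalIntegrable ?_ |>.mul_continuousOn (by fun_prop)
    rw [uIcc_of_le (by positivity)]
    exact monotoneOn_rpow_div_sin hs
  exact abs_integral_le_of_forall_mem_Ioo_abs_integral_le (by positivity) hint fun c hc =>
    abs_integral_rpow_div_sin_mul_sin_le hs (by positivity) hc.1 hc.2.le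

theorem abs_integral_rpow_div_sin_le (n : ℕ) (hn : 1 ≤ n) (x : ℝ)
    (hx0 : 0 < x) (hxπ : x ≤ π) (s : ℝ) (hs : 1 ≤ s) :
    |∫ t in (0:ℝ)..(π / 2),
        (if t = 0 then 0 else t ^ s / Real.sin t) * Real.sin ((2 * n + 1) * t)| ≤
      (π / 2) ^ s * (2 / (2 * n + 1)) :=
  abs_integral_rpow_div_sin_le_general n s hs
end
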